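/- Let V = W ⊕ U be a decomposition of the free right Q-module V = Q² with W projective of rank 1 and U free of rank 1, and let S ∈ M₂(Q) be the matrix of the endomorphism acting as −1 on W and +1 on U. Then S lies in sl₂(Q) = [gl₂(Q), gl₂(Q)]. -/

import Mathlib

/-- The ring `R = k[t₁^{±1}, t₂^{±1}]` of Laurent polynomials in two variables. -/
abbrev LaurentR (k : Type*) [Field k] : Type _ := AddMonoidAlgebra k (ℤ × ℤ)

/-- The variable `t₁ ∈ R`. -/
noncomputable def tOne (k : Type*) [Field k] : LaurentR k :=
  AddMonoidAlgebra.single ((1 : ℤ), (0 : ℤ)) 1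

/-- The variable `t₂ ∈ R`. -/
noncomputable def tTwo (k : Type*) [Field k] : LaurentR k :=
  AddMonoidAlgebra.single ((0 : ℤ), (1 : ℤ)) 1

/-- The map `m : Q ⊕ Q → Q` of right `Q`-modules, `(u,v) ↦ (1+i)u − (1+j)v`. -/
noncomputable def mMap (Q : Type*) [Ring Q] (i j : Q) : (Q × Q) →ₗ[Qᵐᵒᵖ] Q where
  toFun x := (1 + i) * x.1 - (1 + j) * x.2
  map_add' x y := by
    simp only [Prod.fst_add, Prod.snd_add, mul_add]
    abel
  map_smul' q x := by
    simp only [Prod.smul_fst, Prod.smul_snd, MulOpposite.smul_eq_mul_unop,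
      RingHom.id_apply, mul_assoc, sub_mul]

attribute [local instance 100] LieRing.ofAssociativeRing

/-!
Over `R`, the endomorphism `s + 1` kills `W = ker m` and satisfies `m ∘ (s + 1) = 2 m`; since `m` is
onto the free module `Q`, it factors through `m` and has `R`-trace `2 · rank_R Q = 8 = rank_R V`,
so `tr_R s = 0`. The `R`-trace of left multiplication by `q ∈ Q` is `4` times the coefficient of
`1` in `q`, so `S₀₀ + S₁₁` has no scalar part. As `i², j²` are units and `2` is invertible, such
quaternions are sums of commutators: `[ij, j] = 2t₂ i`, `[i, ij] = 2t₁ j`, `[i, j] = 2ij`. Finally,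
`M - E₀₀ · tr M = ∑_{a,b} [E_{a0} M_{ab}, E_{0b}]`, so a matrix whose trace is a sum of commutators
is itself one.
-/

theorem LieAlgebra.lie_mem_derivedSeries_one {R L : Type*} [CommRing R] [LieRing L]
    [LieAlgebra R L] (x y : L) : ⁅x, y⁆ ∈ derivedSeries R L 1 := by
  rw [derivedSeries_def, derivedSeriesOfIdeal_succ, derivedSeriesOfIdeal_zero]
  exact LieSubmodule.lie_mem_lie (LieSubmodule.mem_top x) (LieSubmodule.mem_top y)

namespace Matrix

variable (R : Type*) {A n : Type*} [CommRing R] [Ring A] [Algebra R A] [Fintype n] [DecidableEq n]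

def singleLieHom (a : n) : A →ₗ⁅R⁆ Matrix n n A :=
  { singleLinearMap R a a with
    map_lie' := by
      intro x y
      simp only [AddHom.toFun_eq_coe, LinearMap.coe_toAddHom, singleLinearMap_apply,
        Ring.lie_def, single_mul_single_same]
      exact map_sub (singleAddMonoidHom a a) _ _ }

variable {R}

theorem lie_single_single_one (a b c : n) (x : A) :
    ⁅single a c x, single c b (1 : A)⁆ = single a b x - if b = a then single c c x else 0 := by
  rw [Ring.lie_def, single_mul_single_same, mul_one]
  split_ifs with h
  · rw [h, single_mul_single_same, one_mul]
  · rw [single_mul_single_of_ne _ _ _ _ h, sub_zero]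

theorem eq_sum_lie_add_single_trace (M : Matrix n n A) (c : n) :
    M = ∑ a, ∑ b, ⁅single a c (M a b), single c b (1 : A)⁆ + single c c M.trace := by
  have htrace : single c c M.trace = ∑ a, single c c (M a a) :=
    map_sum (singleAddMonoidHom c c) _ _
  simp only [lie_single_single_one, Finset.sum_sub_distrib, Finset.sum_ite_eq', Finset.mem_univ,
    if_true, htrace, sub_add_cancel]
  exact matrix_eq_sum_single M

theorem mem_derivedSeries_one_of_trace_mem {M : Matrix n n A}
    (h : M.trace ∈ LieAlgebra.derivedSeries R A 1) :
    M ∈ LieAlgebra.derivedSeries R (Matrix n n A) 1 := by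
  cases isEmpty_or_nonempty n with
  | inl _ => rw [Subsingleton.elim M 0]; exact zero_mem _
  | inr hn =>
    obtain ⟨c⟩ := hn
    rw [eq_sum_lie_add_single_trace M c]
    refine add_mem (sum_mem fun a _ => sum_mem fun b _ =>
      LieAlgebra.lie_mem_derivedSeries_one _ _) ?_
    exact LieIdeal.derivedSeries_map_le (f := singleLieHom R c) 1 (LieIdeal.mem_map h)

end Matrix

namespace LinearMap

variable {R M N : Type*} [CommRing R] [AddCommGroup M] [Module R M] [Module.Free R M]
  [Module.Finite R M] [AddCommGroup N] [Module R N] [Module.Free R N] [Module.Finite R N]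

theorem trace_eq_mul_finrank_of_comp_eq_smul (f : M →ₗ[R] N) (hf : Function.Surjective f)
    (p : M →ₗ[R] M) (c : R) (hfp : f ∘ₗ p = c • f) (hker : ker f ≤ ker p) :
    trace R M p = c * Module.finrank R N := by
  obtain ⟨g, hg⟩ := f.exists_rightInverse_of_surjective (range_eq_top.mpr hf)
  have hp : p = (p ∘ₗ g) ∘ₗ f := by
    ext x
    have hx : x - g (f x) ∈ ker f := by
      rw [mem_ker, map_sub, ← comp_apply f g, hg, id_apply, sub_self]
    simpa [sub_eq_zero] using hker hx
  rw [hp, trace_comp_comm', ← comp_assoc, hfp, smul_comp, hg, map_smul, trace_id, smul_eq_mul]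

theorem trace_eq_of_neg_on_ker (f : M →ₗ[R] N) (hf : Function.Surjective f) (s : M →ₗ[R] M)
    (hfs : ∀ x, f (s x) = f x) (hs : ∀ w ∈ ker f, s w = -w) :
    trace R M s = 2 * Module.finrank R N - Module.finrank R M := by
  have h := trace_eq_mul_finrank_of_comp_eq_smul f hf (id + s) 2
    (by ext x; simp [hfs, two_smul]) (fun w hw => by simp [hs w hw])
  rw [map_add, trace_id] at h
  rw [← h, add_sub_cancel_left]

theorem trace_prod (φ : M × N →ₗ[R] M × N) :
    trace R (M × N) φ = trace R M (fst R M N ∘ₗ φ ∘ₗ inl R M N) +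
      trace R N (snd R M N ∘ₗ φ ∘ₗ inr R M N) := by
  have hφ : φ = prodMap (fst R M N ∘ₗ φ ∘ₗ inl R M N) (snd R M N ∘ₗ φ ∘ₗ inr R M N) +
      inl R M N ∘ₗ (fst R M N ∘ₗ φ ∘ₗ inr R M N) ∘ₗ snd R M N +
      inr R M N ∘ₗ (snd R M N ∘ₗ φ ∘ₗ inl R M N) ∘ₗ fst R M N := by
    have h0 : φ (0, 0) = 0 := by rw [Prod.mk_zero_zero, map_zero]
    ext x <;> simp [h0]
  have hl : ∀ g : N →ₗ[R] M, trace R (M × N) (inl R M N ∘ₗ g ∘ₗ snd R M N) = 0 := fun g => by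
    rw [trace_comp_comm', comp_assoc, snd_comp_inl, comp_zero, map_zero]
  have hr : ∀ g : M →ₗ[R] N, trace R (M × N) (inr R M N ∘ₗ g ∘ₗ fst R M N) = 0 := fun g => by
    rw [trace_comp_comm', comp_assoc, fst_comp_inr, comp_zero, map_zero]
  conv_lhs => rw [hφ, map_add, map_add, trace_prodMap', hl, hr, add_zero, add_zero]

end LinearMap

namespace QuaternionBasis

variable {A Q : Type*} [CommRing A] [Ring Q] [Algebra A Q] {i j : Q} {a b : A}

theorem i_mul_ij (hi : i * i = algebraMap A Q a) : i * (i * j) = a • j := by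
  rw [← mul_assoc, hi, Algebra.smul_def]

theorem ij_mul_j (hj : j * j = algebraMap A Q b) : i * j * j = b • i := by
  rw [mul_assoc, hj, Algebra.smul_def, Algebra.commutes]

theorem ij_mul_i (hi : i * i = algebraMap A Q a) (hij : i * j = -(j * i)) :
    i * j * i = -(a • j) := by
  rw [hij, neg_mul, mul_assoc, hi, ← Algebra.commutes, ← Algebra.smul_def]

theorem j_mul_ij (hj : j * j = algebraMap A Q b) (hij : i * j = -(j * i)) :
    j * (i * j) = -(b • i) := by
  rw [hij, mul_neg, ← mul_assoc, hj, Algebra.smul_def]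

theorem ij_mul_ij (hi : i * i = algebraMap A Q a) (hj : j * j = algebraMap A Q b)
    (hij : i * j = -(j * i)) : i * j * (i * j) = -((a * b) • 1) := by
  rw [← mul_assoc, ij_mul_i hi hij, neg_mul, smul_mul_assoc, hj, mul_smul,
    Algebra.smul_def b (1 : Q), mul_one]

theorem trace_mulLeft (hi : i * i = algebraMap A Q a) (hj : j * j = algebraMap A Q b)
    (hij : i * j = -(j * i)) (bQ : Module.Basis (Fin 4) A Q)
    (hb0 : bQ 0 = 1) (hb1 : bQ 1 = i) (hb2 : bQ 2 = j) (hb3 : bQ 3 = i * j) (q : Q) :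
    LinearMap.trace A Q (LinearMap.mulLeft A q) = 4 * bQ.repr q 0 := by
  have hji : j * i = -(i * j) := by rw [hij, neg_neg]
  have hii : i * i = a • 1 := by rw [hi, Algebra.smul_def, mul_one]
  have hjj : j * j = b • 1 := by rw [hj, Algebra.smul_def, mul_one]
  have hr0 : bQ.repr 1 = Finsupp.single 0 1 := hb0 ▸ bQ.repr_self 0
  have hr1 : bQ.repr i = Finsupp.single 1 1 := hb1 ▸ bQ.repr_self 1
  have hr2 : bQ.repr j = Finsupp.single 2 1 := hb2 ▸ bQ.repr_self 2
  have hr3 : bQ.repr (i * j) = Finsupp.single 3 1 := hb3 ▸ bQ.repr_self 3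
  suffices h : LinearMap.trace A Q ∘ₗ LinearMap.mul A Q = (4 : A) • bQ.coord 0 from
    LinearMap.congr_fun h q
  refine bQ.ext fun s => ?_
  rw [LinearMap.comp_apply, LinearMap.trace_eq_matrix_trace A bQ,
    Matrix.trace, Fin.sum_univ_four]
  simp only [Matrix.diag_apply, LinearMap.toMatrix_apply]
  fin_cases s <;> simp [hb0, hb1, hb2, hb3, hr0, hr1, hr2, hr3, hii, hjj, hji, i_mul_ij hi,
    ij_mul_j hj, ij_mul_i hi hij, j_mul_ij hj hij, ij_mul_ij hi hj hij]
  norm_num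

variable {K : Type*} [Field K] [Algebra K Q]

theorem smul_mem_derivedSeries_of_lie_eq {x y z : Q} {u : A} (hu : IsUnit u) (h2 : (2 : K) ≠ 0)
    (h : ⁅y, z⁆ = (2 * u) • x) (r : A) : r • x ∈ LieAlgebra.derivedSeries K Q 1 := by
  obtain ⟨u, rfl⟩ := hu
  have hc : (↑u⁻¹ * r) * (2 * ↑u) = 2 * r := by
    rw [mul_comm (2 : A), ← mul_assoc, mul_right_comm (↑u⁻¹ : A) r, Units.inv_mul, one_mul,
      mul_comm]
  have hx : r • x = (2⁻¹ : K) • ⁅(↑u⁻¹ * r) • y, z⁆ := by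
    rw [smul_lie, h, smul_smul, hc, mul_smul, ofNat_smul_eq_nsmul (R := A),
      ← ofNat_smul_eq_nsmul (R := K), inv_smul_smul₀ h2]
  rw [hx]
  exact Submodule.smul_mem _ _ (LieAlgebra.lie_mem_derivedSeries_one _ _)

theorem mem_derivedSeries_one_of_repr_zero (hi : i * i = algebraMap A Q a)
    (hj : j * j = algebraMap A Q b) (hij : i * j = -(j * i)) (ha : IsUnit a) (hb : IsUnit b)
    (h2 : (2 : K) ≠ 0) (bQ : Module.Basis (Fin 4) A Q)
    (hb1 : bQ 1 = i) (hb2 : bQ 2 = j) (hb3 : bQ 3 = i * j) {q : Q} (hq : bQ.repr q 0 = 0) :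
    q ∈ LieAlgebra.derivedSeries K Q 1 := by
  have hlie_i : ⁅i * j, j⁆ = (2 * b) • i := by
    rw [Ring.lie_def, ij_mul_j hj, j_mul_ij hj hij, sub_neg_eq_add, ← two_smul A, smul_smul]
  have hlie_j : ⁅i, i * j⁆ = (2 * a) • j := by
    rw [Ring.lie_def, i_mul_ij hi, ij_mul_i hi hij, sub_neg_eq_add, ← two_smul A, smul_smul]
  have hlie_ij : ⁅i, j⁆ = ((2 : A) * 1) • (i * j) := by
    rw [Ring.lie_def, mul_one, two_smul, ← sub_neg_eq_add, hij, neg_neg]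
  rw [← bQ.sum_repr q, Fin.sum_univ_four, hq, zero_smul, zero_add, hb1, hb2, hb3]
  exact add_mem (add_mem (smul_mem_derivedSeries_of_lie_eq hb h2 hlie_i _)
    (smul_mem_derivedSeries_of_lie_eq ha h2 hlie_j _))
    (smul_mem_derivedSeries_of_lie_eq isUnit_one h2 hlie_ij _)

end QuaternionBasis

theorem isUnit_tOne (k : Type*) [Field k] : IsUnit (tOne k) :=
  IsUnit.of_mul_eq_one (AddMonoidAlgebra.single ((-1 : ℤ), (0 : ℤ)) 1) (by
    rw [tOne, AddMonoidAlgebra.single_mul_single, AddMonoidAlgebra.one_def]; norm_num; rfl)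

theorem isUnit_tTwo (k : Type*) [Field k] : IsUnit (tTwo k) :=
  IsUnit.of_mul_eq_one (AddMonoidAlgebra.single ((0 : ℤ), (-1 : ℤ)) 1) (by
    rw [tTwo, AddMonoidAlgebra.single_mul_single, AddMonoidAlgebra.one_def]; norm_num; rfl)

theorem mMap_surjective {K Q : Type*} [Field K] [Ring Q] [Algebra K Q] (h2 : (2 : K) ≠ 0)
    {i j : Q} (hij : i * j = -(j * i)) : Function.Surjective (mMap Q i j) := by
  intro q
  refine ⟨((2⁻¹ : K) • ((1 - j) * q), (2⁻¹ : K) • ((i - 1) * q)), ?_⟩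
  show (1 + i) * ((2⁻¹ : K) • ((1 - j) * q)) - (1 + j) * ((2⁻¹ : K) • ((i - 1) * q)) = q
  have h : (1 + i) * (1 - j) - (1 + j) * (i - 1) = 2 := by
    have h' : (1 + i) * (1 - j) - (1 + j) * (i - 1) = 1 + 1 - (i * j + j * i) := by noncomm_ring
    rw [h', hij, neg_add_cancel, sub_zero, one_add_one_eq_two]
  rw [mul_smul_comm, mul_smul_comm, ← smul_sub, ← mul_assoc, ← mul_assoc, ← sub_mul, h,
    two_mul, ← two_smul K, inv_smul_smul₀ h2]

theorem LinearMap.apply_apply_eq_of_isCompl_ker {R M N : Type*} [Ring R] [AddCommGroup M]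
    [Module R M] [AddCommGroup N] [Module R N] {f : M →ₗ[R] N} {s : M →ₗ[R] M}
    {U : Submodule R M} (hU : IsCompl (ker f) U) (hsW : ∀ w ∈ ker f, s w = -w)
    (hsU : ∀ u ∈ U, s u = u) (x : M) : f (s x) = f x := by
  obtain ⟨w, hw, u, hu, rfl⟩ := Submodule.mem_sup.mp (hU.sup_eq_top ▸ Submodule.mem_top (x := x))
  rw [map_add, hsW w hw, hsU u hu, map_add, map_add, map_neg, mem_ker.mp hw, neg_zero]

theorem matrix_of_reflection_mem_sl2_general
    (k : Type*) [Field k] [CharZero k]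
    (Q : Type*) [Ring Q] [Algebra (LaurentR k) Q]
    [Algebra k Q]
    (i j : Q)
    (hi : i * i = algebraMap (LaurentR k) Q (tOne k))
    (hj : j * j = algebraMap (LaurentR k) Q (tTwo k))
    (hij : i * j = -(j * i))
    (bQ : Module.Basis (Fin 4) (LaurentR k) Q)
    (hb0 : bQ 0 = 1) (hb1 : bQ 1 = i) (hb2 : bQ 2 = j) (hb3 : bQ 3 = i * j)
    (U : Submodule Qᵐᵒᵖ (Q × Q))
    (hWU : IsCompl (LinearMap.ker (mMap Q i j)) U)
    (s : (Q × Q) →ₗ[Qᵐᵒᵖ] (Q × Q))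
    (hsW : ∀ w ∈ LinearMap.ker (mMap Q i j), s w = -w)
    (hsU : ∀ u ∈ U, s u = u)
    (S : Matrix (Fin 2) (Fin 2) Q)
    (hS : ∀ u v : Q, s (u, v) = (S 0 0 * u + S 0 1 * v, S 1 0 * u + S 1 1 * v)) :
    S ∈ LieAlgebra.derivedSeries k (Matrix (Fin 2) (Fin 2) Q) 1 := by
  have := Module.Free.of_basis bQ
  have := Module.Finite.of_basis bQ
  have h2 : (2 : k) ≠ 0 := two_ne_zero
  have htrace : LinearMap.trace (LaurentR k) (Q × Q) (s.restrictScalars (LaurentR k)) = 0 := by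
    rw [LinearMap.trace_eq_of_neg_on_ker ((mMap Q i j).restrictScalars (LaurentR k))
      (mMap_surjective h2 hij) (s.restrictScalars (LaurentR k))
      (fun x => LinearMap.apply_apply_eq_of_isCompl_ker hWU hsW hsU x) (fun w hw => hsW w hw),
      Module.finrank_prod]
    push_cast
    ring
  have hblocks : LinearMap.trace (LaurentR k) (Q × Q) (s.restrictScalars (LaurentR k)) =
      LinearMap.trace (LaurentR k) Q (LinearMap.mulLeft _ (S 0 0)) +
        LinearMap.trace (LaurentR k) Q (LinearMap.mulLeft _ (S 1 1)) := by
    rw [LinearMap.trace_prod]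
    congr 2 <;> ext q <;> simp [hS]
  rw [hblocks, QuaternionBasis.trace_mulLeft hi hj hij bQ hb0 hb1 hb2 hb3,
    QuaternionBasis.trace_mulLeft hi hj hij bQ hb0 hb1 hb2 hb3, ← mul_add, ← Finsupp.add_apply,
    ← map_add] at htrace
  have hrepr : bQ.repr (S 0 0 + S 1 1) 0 = 0 := by
    have h4 : (4 : k) • bQ.repr (S 0 0 + S 1 1) 0 = 0 := by rwa [Algebra.smul_def, map_ofNat]
    exact (smul_eq_zero.mp h4).resolve_left (by norm_num)
  refine Matrix.mem_derivedSeries_one_of_trace_mem ?_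
  rw [Matrix.trace_fin_two]
  exact QuaternionBasis.mem_derivedSeries_one_of_repr_zero hi hj hij (isUnit_tOne k)
    (isUnit_tTwo k) h2 bQ hb1 hb2 hb3 hrepr

/-- Let `V = Q ⊕ Q = W ⊕ U` with `W = ker(m)` (the non-free rank-one projective module)
and `U` a complement, and let `s` be the `Q`-linear endomorphism of `V` acting as `−1` on
`W` and as `+1` on `U`.  Then the matrix `S` of `s` in the standard basis lies in
`sl₂(Q) = [gl₂(Q), gl₂(Q)]`. -/
theorem matrix_of_reflection_mem_sl2
    (k : Type*) [Field k] [IsAlgClosed k] [CharZero k]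
    (Q : Type*) [Ring Q] [Algebra (LaurentR k) Q]
    [Algebra k Q] [IsScalarTower k (LaurentR k) Q]
    (i j : Q)
    (hi : i * i = algebraMap (LaurentR k) Q (tOne k))
    (hj : j * j = algebraMap (LaurentR k) Q (tTwo k))
    (hij : i * j = -(j * i))
    (bQ : Module.Basis (Fin 4) (LaurentR k) Q)
    (hb0 : bQ 0 = 1) (hb1 : bQ 1 = i) (hb2 : bQ 2 = j) (hb3 : bQ 3 = i * j)
    (U : Submodule Qᵐᵒᵖ (Q × Q))
    (hWU : IsCompl (LinearMap.ker (mMap Q i j)) U)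
    (s : (Q × Q) →ₗ[Qᵐᵒᵖ] (Q × Q))
    (hsW : ∀ w ∈ LinearMap.ker (mMap Q i j), s w = -w)
    (hsU : ∀ u ∈ U, s u = u)
    (S : Matrix (Fin 2) (Fin 2) Q)
    (hS : ∀ u v : Q, s (u, v) = (S 0 0 * u + S 0 1 * v, S 1 0 * u + S 1 1 * v)) :
    S ∈ LieAlgebra.derivedSeries k (Matrix (Fin 2) (Fin 2) Q) 1 :=
  matrix_of_reflection_mem_sl2_general k Q i j hi hj hij bQ hb0 hb1 hb2 hb3 U hWU s hsW hsU S hS
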